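/- arXiv:2207.12330 — 5 statements merged into one kernel-verified Lean document; each statement's English description precedes it below -/
import Mathlib

section
/- Suppose a² + b² + c² = 1 and a'² + b'² + c'² = 1, and set d = aa'+bb'+cc', e = b'c - bc', f = ac' - a'c, g = a'b - ab'. Then the 6×6 Hermitian block matrix P with 2×2 blocks P₁₁ = P₂₂ = P₃₃ = Id, P₂₁ = M_{a,b,c}, P₃₁ = M_{a',b',c'}, P₁₂ = M_{a,b,c}ᴴ, P₁₃ = M_{a',b',c'}ᴴ, P₃₂ = [[d + g·i, f + e·i], [-f + e·i, d - g·i]], P₂₃ = P₃₂ᴴ, factors as P = A · Aᴴ where A is the 6×2 matrix obtained by stacking Id, M_{a,b,c}, M_{a',b',c'}. -/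
open Matrix Complex

def M (a b c : ℝ) : Matrix (Fin 2) (Fin 2) ℂ :=
  !![-(c:ℂ) * I, -(b:ℂ) - (a:ℂ) * I;
     (b:ℂ) - (a:ℂ) * I, (c:ℂ) * I]

def N (d e f g : ℝ) : Matrix (Fin 2) (Fin 2) ℂ :=
  !![(d:ℂ) + (g:ℂ) * I, (f:ℂ) + (e:ℂ) * I;
     -(f:ℂ) + (e:ℂ) * I, (d:ℂ) - (g:ℂ) * I]

def blk (a b c a' b' c' d e f g : ℝ) : Fin 3 → Fin 3 → Matrix (Fin 2) (Fin 2) ℂ :=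
  ![![1, (M a b c)ᴴ, (M a' b' c')ᴴ],
    ![M a b c, 1, (N d e f g)ᴴ],
    ![M a' b' c', N d e f g, 1]]

def P (a b c a' b' c' d e f g : ℝ) : Matrix (Fin 3 × Fin 2) (Fin 3 × Fin 2) ℂ :=
  fun p q => blk a b c a' b' c' d e f g p.1 q.1 p.2 q.2

def A (a b c a' b' c' : ℝ) : Matrix (Fin 3 × Fin 2) (Fin 2) ℂ :=
  fun p l => (![1, M a b c, M a' b' c'] p.1) p.2 l

set_option maxHeartbeats 1000000 in
theorem P_eq_A_mul_Ah (a b c a' b' c' d e f g : ℝ)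
    (h : a ^ 2 + b ^ 2 + c ^ 2 = 1) (h' : a' ^ 2 + b' ^ 2 + c' ^ 2 = 1)
    (hd : d = a * a' + b * b' + c * c') (he : e = b' * c - b * c')
    (hf : f = a * c' - a' * c) (hg : g = a' * b - a * b') :
    P a b c a' b' c' d e f g = A a b c a' b' c' * (A a b c a' b' c')ᴴ := by
  subst hd he hf hg
  ext ⟨i, k⟩ ⟨j, l⟩
  simp only [P, A, blk, Matrix.mul_apply, Fin.sum_univ_two, conjTranspose_apply]
  fin_cases i <;> fin_cases j <;> fin_cases k <;> fin_cases l <;>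
    simp [M, N, Matrix.one_apply, Complex.ext_iff] <;>
    constructor <;> nlinarith [h, h', sq_nonneg a, sq_nonneg b]
end

section
/- If a² + b² + c² = 1, a'² + b'² + c'² = 1, d = aa'+bb'+cc', e = b'c - bc', f = ac' - a'c, and g = a'b - ab', then the 6×6 Hermitian matrix P defined in (the block structure with identity diagonal blocks and off-diagonal blocks built from M_{a,b,c}, M_{a',b',c'} and d,e,f,g) is positive semidefinite. -/
open Matrix Complex
open scoped ComplexOrder

set_option maxHeartbeats 4000000 in
theorem P_posSemidef (a b c a' b' c' d e f g : ℝ)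
    (h : a ^ 2 + b ^ 2 + c ^ 2 = 1) (h' : a' ^ 2 + b' ^ 2 + c' ^ 2 = 1)
    (hd : d = a * a' + b * b' + c * c') (he : e = b' * c - b * c')
    (hf : f = a * c' - a' * c) (hg : g = a' * b - a * b') :
    (P a b c a' b' c' d e f g).PosSemidef := by
  have key : P a b c a' b' c' d e f g = A a b c a' b' c' * (A a b c a' b' c')ᴴ := by
    subst hd he hf hg
    ext ⟨i, k⟩ ⟨j, l⟩
    fin_cases i <;> fin_cases j <;> fin_cases k <;> fin_cases l <;>
      simp [P, A, blk, M, N, Matrix.mul_apply, Matrix.conjTranspose_apply,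
        Fin.sum_univ_two, Matrix.one_apply, Complex.ext_iff] <;>
      ring_nf <;>
      simp [Complex.ext_iff] <;>
      nlinarith [h, h', sq_nonneg a, sq_nonneg b]
  rw [key]
  exact Matrix.posSemidef_self_mul_conjTranspose _
end

section
/- If a² + b² + c² = 1, a'² + b'² + c'² = 1, d = aa'+bb'+cc', e = b'c - bc', f = ac' - a'c, g = a'b - ab', then the 6×6 Hermitian matrix P (as defined from these data) has rank exactly 2. -/
open Matrix Complex

open ComplexOrder

set_option maxHeartbeats 2000000 in
theorem P_rank_eq_two (a b c a' b' c' d e f g : ℝ)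
    (h : a ^ 2 + b ^ 2 + c ^ 2 = 1) (h' : a' ^ 2 + b' ^ 2 + c' ^ 2 = 1)
    (hd : d = a * a' + b * b' + c * c') (he : e = b' * c - b * c')
    (hf : f = a * c' - a' * c) (hg : g = a' * b - a * b') :
    (P a b c a' b' c' d e f g).rank = 2 := by
  subst hd he hf hg
  have key : P a b c a' b' c' (a * a' + b * b' + c * c') (b' * c - b * c') (a * c' - a' * c) (a' * b - a * b') = A a b c a' b' c' * (A a b c a' b' c')ᴴ := by
    ext ⟨i, k⟩ ⟨j, l⟩
    fin_cases i <;> fin_cases j <;> fin_cases k <;> fin_cases l <;>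
      simp [P, A, blk, M, N, Matrix.mul_apply, Fin.sum_univ_two,
        Matrix.conjTranspose_apply, Matrix.one_apply, Complex.ext_iff] <;>
      (try constructor) <;> nlinarith [h, h']
  have key2 : (A a b c a' b' c')ᴴ * A a b c a' b' c' = Matrix.diagonal (fun _ => (3:ℂ)) := by
    ext k l
    fin_cases k <;> fin_cases l <;>
      simp [A, M, Matrix.mul_apply, Fintype.sum_prod_type, Fin.sum_univ_three,
        Fin.sum_univ_two, Matrix.conjTranspose_apply,
        Matrix.one_apply, Matrix.diagonal, Complex.ext_iff] <;>
      (try constructor) <;> nlinarith [h, h']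
  have hrank3 : (Matrix.diagonal (fun _ : Fin 2 => (3:ℂ))).rank = 2 := by
    rw [Matrix.rank_of_isUnit]
    · simp
    · rw [Matrix.isUnit_iff_isUnit_det, Matrix.det_diagonal]
      norm_num
  rw [key, Matrix.rank_self_mul_conjTranspose, ← Matrix.rank_conjTranspose_mul_self, key2, hrank3]
end

section
/- Conversely, if the 6×6 Hermitian matrix P (with identity diagonal blocks, block (2,1) = M_{a,b,c}, block (3,1) = M_{a',b',c'}, block (3,2) = [[d + g·i, f + e·i], [-f + e·i, d - g·i]]) equals A·Aᴴ with A the stacking of Id, M_{a,b,c}, M_{a',b',c'}, then necessarily a² + b² + c² = 1, a'² + b'² + c'² = 1, d = aa'+bb'+cc', e = b'c - bc', f = ac' - a'c, and g = a'b - ab'. -/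
open Matrix Complex

theorem P_factorization_necessary_conditions (a b c a' b' c' d e f g : ℝ)
    (hP : P a b c a' b' c' d e f g = A a b c a' b' c' * (A a b c a' b' c')ᴴ) :
    a ^ 2 + b ^ 2 + c ^ 2 = 1 ∧ a' ^ 2 + b' ^ 2 + c' ^ 2 = 1 ∧
      d = a * a' + b * b' + c * c' ∧ e = b' * c - b * c' ∧
      f = a * c' - a' * c ∧ g = a' * b - a * b' := by
  have h1 := congrFun (congrFun hP (1,0)) (1,0)
  have h2 := congrFun (congrFun hP (2,0)) (2,0)
  have h3 := congrFun (congrFun hP (2,0)) (1,0)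
  have h4 := congrFun (congrFun hP (2,0)) (1,1)
  simp [P, blk, A, M, N, Matrix.mul_apply, Fin.sum_univ_two, Matrix.conjTranspose_apply,
    Complex.ext_iff] at h1 h2 h3 h4
  refine ⟨by nlinarith [h1.1], by nlinarith [h2.1], by nlinarith [h3.1],
    by nlinarith [h4.2], by nlinarith [h4.1], by nlinarith [h3.2]⟩
end

section
/- If the structured 6×6 Hermitian matrix P(a,b,c,a',b',c',d,e,f,g) is positive semidefinite, then a² + b² + c² ≤ 1, a'² + b'² + c'² ≤ 1, and d ∈ [-1, 1]. -/
open Matrix Complex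
open scoped ComplexOrder

/-!
Each pair of block rows of `P` cuts out a positive semidefinite principal submatrix
`[[1, Xᴴ], [X, 1]]`, whose Schur complement `1 - X Xᴴ` is then positive semidefinite. The blocks
are scaled unitaries (quaternions): `M a b c * (M a b c)ᴴ = (a² + b² + c²) • 1` and
`N d e f g * (N d e f g)ᴴ = (d² + e² + f² + g²) • 1`, so the Schur complements bound these sums
of squares by `1`.
-/

namespace Matrix

variable {ι κ R : Type*}

theorem comp_submatrix_sumElim (B : Matrix ι ι (Matrix κ κ R)) (i j : ι) :
    (comp ι ι κ κ R B).submatrix (Sum.elim (i, ·) (j, ·)) (Sum.elim (i, ·) (j, ·)) =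
      fromBlocks (B i i) (B i j) (B j i) (B j j) := by
  ext (k | k) (l | l) <;> rfl

theorem PosSemidef.one_sub_mul_conjTranspose_of_fromBlocks [Fintype κ] [DecidableEq κ]
    [Field R] [PartialOrder R] [StarRing R] [StarOrderedRing R] {X : Matrix κ κ R}
    (h : (fromBlocks 1 Xᴴ X 1).PosSemidef) : (1 - X * Xᴴ).PosSemidef := by
  have : Invertible (1 : Matrix κ κ R) := invertibleOne
  have := (PosDef.fromBlocks₁₁ Xᴴ (1 : Matrix κ κ R) PosDef.one).mp
  simpa using this (by simpa using h)

end Matrix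

theorem le_one_of_posSemidef_one_sub_smul {𝕜 n : Type*} [RCLike 𝕜] [Fintype n] [DecidableEq n]
    [Nonempty n] {s : ℝ} (h : (1 - (s : 𝕜) • 1 : Matrix n n 𝕜).PosSemidef) : s ≤ 1 := by
  simpa using h.diag_nonneg (i := Classical.arbitrary n)

theorem M_mul_conjTranspose (a b c : ℝ) :
    M a b c * (M a b c)ᴴ = ((a ^ 2 + b ^ 2 + c ^ 2 : ℝ) : ℂ) • 1 := by
  ext i j
  fin_cases i <;> fin_cases j <;> simp [M, mul_apply, Fin.sum_univ_two] <;> ring_nf <;>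
    simp only [I_sq] <;> ring

theorem N_mul_conjTranspose (d e f g : ℝ) :
    N d e f g * (N d e f g)ᴴ = ((d ^ 2 + e ^ 2 + f ^ 2 + g ^ 2 : ℝ) : ℂ) • 1 := by
  ext i j
  fin_cases i <;> fin_cases j <;> simp [N, mul_apply, Fin.sum_univ_two] <;> ring_nf <;>
    simp only [I_sq] <;> ring

theorem sum_sq_le_one_of_posSemidef_fromBlocks_M {a b c : ℝ}
    (h : (fromBlocks 1 (M a b c)ᴴ (M a b c) 1).PosSemidef) : a ^ 2 + b ^ 2 + c ^ 2 ≤ 1 :=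
  le_one_of_posSemidef_one_sub_smul <|
    M_mul_conjTranspose a b c ▸ h.one_sub_mul_conjTranspose_of_fromBlocks

theorem sum_sq_le_one_of_posSemidef_fromBlocks_N {d e f g : ℝ}
    (h : (fromBlocks 1 (N d e f g)ᴴ (N d e f g) 1).PosSemidef) :
    d ^ 2 + e ^ 2 + f ^ 2 + g ^ 2 ≤ 1 :=
  le_one_of_posSemidef_one_sub_smul <|
    N_mul_conjTranspose d e f g ▸ h.one_sub_mul_conjTranspose_of_fromBlocks

theorem P_submatrix (a b c a' b' c' d e f g : ℝ) (i j : Fin 3) :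
    (P a b c a' b' c' d e f g).submatrix (Sum.elim (i, ·) (j, ·)) (Sum.elim (i, ·) (j, ·)) =
      fromBlocks (blk a b c a' b' c' d e f g i i) (blk a b c a' b' c' d e f g i j)
        (blk a b c a' b' c' d e f g j i) (blk a b c a' b' c' d e f g j j) :=
  comp_submatrix_sumElim (of (blk a b c a' b' c' d e f g)) i j

theorem P_psd_necessary_bounds (a b c a' b' c' d e f g : ℝ)
    (hP : (P a b c a' b' c' d e f g).PosSemidef) :
    a ^ 2 + b ^ 2 + c ^ 2 ≤ 1 ∧ a' ^ 2 + b' ^ 2 + c' ^ 2 ≤ 1 ∧ d ∈ Set.Icc (-1 : ℝ) 1 := by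
  have block (i j : Fin 3) := P_submatrix a b c a' b' c' d e f g i j ▸ hP.submatrix _
  have hN := sum_sq_le_one_of_posSemidef_fromBlocks_N (block 1 2)
  have hd : d ^ 2 ≤ 1 := by linarith [sq_nonneg e, sq_nonneg f, sq_nonneg g]
  exact ⟨sum_sq_le_one_of_posSemidef_fromBlocks_M (block 0 1),
    sum_sq_le_one_of_posSemidef_fromBlocks_M (block 0 2),
    abs_le.mp ((sq_le_one_iff_abs_le_one d).mp hd)⟩
end
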